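/- Let K be a complete nonarchimedean field and consider the K-vector space D of formal sums P = Σ_{k∈ℕ} a_k ∂^[k] with a_k ∈ K⟨t⟩ (Tate algebra in one variable, with Gauss norm) such that there exist C > 0 and η < 1 with |a_k| ≤ C η^k. Then D is closed under the (formal, noncommutative) product determined by the Leibniz rule ∂^[k] · a = Σ_{i≤k} ∂^[i](a) ∂^[k−i] for a ∈ K⟨t⟩, where ∂^[i](a) denotes the i-th divided derivative of a. -/
import Mathlib

/-- Overconvergent differential operators are closed under composition.

`A` abstracts the Tate algebra `K⟨t⟩` (a complete ultrametric normed ring), with divided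
derivatives `δ i = ∂^[i]` satisfying `‖δ i a‖ ≤ ‖a‖`.  If `P = Σ a_k ∂^[k]` and
`Q = Σ b_l ∂^[l]` have coefficients decaying geometrically, the coefficients of the
composite `P·Q`, computed by the Leibniz rule `∂^[k]·a = Σ_{i ≤ k} ∂^[i](a) ∂^[k−i]`
and `∂^[i]·∂^[j] = (i+j choose j) ∂^[i+j]`, namely
`c n = Σ_{i, l ≤ n} (n choose l) a_{n−l+i} ∂^[i](b_l)`, again decay geometrically. -/
theorem stmt_11 {A : Type*} [NormedCommRing A] [IsUltrametricDist A] [NormOneClass A]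
    [CompleteSpace A]
    (δ : ℕ → A →+ A) (hδ0 : δ 0 = AddMonoidHom.id A)
    (hδ : ∀ (i : ℕ) (x : A), ‖δ i x‖ ≤ ‖x‖)
    (a b : ℕ → A) (C η : ℝ) (hC : 0 < C) (hη0 : 0 < η) (hη1 : η < 1)
    (ha : ∀ k, ‖a k‖ ≤ C * η ^ k) (hb : ∀ k, ‖b k‖ ≤ C * η ^ k)
    (c : ℕ → A)
    (hc : ∀ n, HasSum (fun q : ℕ × ℕ =>
      if q.2 ≤ n then (n.choose q.2 : A) * (a (n - q.2 + q.1) * δ q.1 (b q.2)) else 0)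
      (c n)) :
    ∃ C' : ℝ, 0 < C' ∧ ∃ η' : ℝ, 0 < η' ∧ η' < 1 ∧ ∀ n, ‖c n‖ ≤ C' * η' ^ n := by
  refine ⟨C * C, mul_pos hC hC, η, hη0, hη1, fun n => ?_⟩
  rw [← (hc n).tsum_eq]
  have hnn : (0:ℝ) ≤ C * C * η ^ n :=
    mul_nonneg (mul_nonneg hC.le hC.le) (pow_nonneg hη0.le n)
  refine IsUltrametricDist.norm_tsum_le_of_forall_le_of_nonneg hnn fun q => ?_
  by_cases h : q.2 ≤ n
  · simp only [h, if_true]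
    calc ‖(n.choose q.2 : A) * (a (n - q.2 + q.1) * δ q.1 (b q.2))‖
        ≤ ‖(n.choose q.2 : A)‖ * ‖a (n - q.2 + q.1) * δ q.1 (b q.2)‖ := norm_mul_le _ _
      _ ≤ 1 * ‖a (n - q.2 + q.1) * δ q.1 (b q.2)‖ := by
          gcongr
          exact IsUltrametricDist.norm_natCast_le_one A _
      _ = ‖a (n - q.2 + q.1) * δ q.1 (b q.2)‖ := one_mul _
      _ ≤ ‖a (n - q.2 + q.1)‖ * ‖δ q.1 (b q.2)‖ := norm_mul_le _ _
      _ ≤ (C * η ^ (n - q.2 + q.1)) * (C * η ^ q.2) :=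
          mul_le_mul (ha _) ((hδ _ _).trans (hb _)) (norm_nonneg _)
            (le_trans (norm_nonneg _) (ha _))
      _ = C * C * η ^ (n - q.2 + q.1 + q.2) := by ring
      _ ≤ C * C * η ^ n := by
          apply mul_le_mul_of_nonneg_left _ (mul_nonneg hC.le hC.le)
          exact pow_le_pow_of_le_one hη0.le hη1.le (by omega)
  · simp [h, hnn]
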